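/- arXiv:2405.10438 — 5 statements merged into one kernel-verified Lean document; each statement's English description precedes it below -/
import Mathlib

section
/- Let a = max_{t∈[0,1]} (1+t)²(1-t)t / (4(1+4t+4t²)). Then for all x in the unit ball B ⊆ ℝ³, the inequality x_1² x_2² x_3 ≤ a(1 - T_3(x_3)) holds, where T_3(t) = 4t³ - 3t. -/
/-!
Write `T(t) = 4t³ - 3t`; then `1 - T(t) = (1 - t)(1 + 2t)²`, which is nonnegative for `t ≤ 1`.
For `x₃ ≤ 0` the left side is `≤ 0`. For `x₃ > 0`, AM-GM on the disc `x₁² + x₂² ≤ 1 - x₃²` gives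
`x₁² x₂² x₃ ≤ (1 - x₃²)² x₃ / 4`, and this equals `f(x₃) (1 - T(x₃))` with
`f(t) = (1+t)²(1-t)t / (4(1+2t)²)`, the function whose maximum on `[0, 1]` is `a`.
-/

lemma one_sub_chebyshev_three_eq (t : ℝ) :
    1 - (4 * t^3 - 3 * t) = (1 - t) * (1 + 2 * t)^2 := by
  ring

lemma one_sub_chebyshev_three_nonneg {t : ℝ} (ht : t ≤ 1) : 0 ≤ 1 - (4 * t^3 - 3 * t) := by
  rw [one_sub_chebyshev_three_eq]
  exact mul_nonneg (by linarith) (sq_nonneg _)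

lemma sq_mul_sq_le_of_sq_add_sq_le {x y s : ℝ} (h : x^2 + y^2 ≤ s) :
    x^2 * y^2 ≤ (s / 2)^2 := by
  have hamgm := four_mul_le_sq_add (x^2) (y^2)
  have hsq : (x^2 + y^2)^2 ≤ s^2 := pow_le_pow_left₀ (by positivity) h 2
  linarith

lemma sq_one_sub_sq_div_two_mul_eq {t : ℝ} (ht : 0 < t) :
    ((1 - t^2) / 2)^2 * t
      = (1 + t)^2 * (1 - t) * t / (4 * (1 + 4*t + 4*t^2)) * (1 - (4 * t^3 - 3 * t)) := by
  have h : 1 + 4*t + 4*t^2 ≠ 0 := by positivity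
  field_simp
  ring

/-- With `a = max_{t∈[0,1]} (1+t)²(1-t)t / (4(1+4t+4t²))`, for all `x` in the unit
ball of `ℝ³` one has `x_1² x_2² x_3 ≤ a (1 - T_3(x_3))`, where `T_3(t) = 4t³-3t`. -/
theorem stmt_9 (a : ℝ)
    (ha : IsGreatest {v : ℝ | ∃ t ∈ Set.Icc (0:ℝ) 1,
      v = (1 + t)^2 * (1 - t) * t / (4 * (1 + 4*t + 4*t^2))} a)
    (x₁ x₂ x₃ : ℝ) (hx : x₁^2 + x₂^2 + x₃^2 ≤ 1) :
    x₁^2 * x₂^2 * x₃ ≤ a * (1 - (4 * x₃^3 - 3 * x₃)) := by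
  have hx₃ : x₃ ≤ 1 := by nlinarith [sq_nonneg x₁, sq_nonneg x₂, sq_nonneg (x₃ - 1)]
  have hT := one_sub_chebyshev_three_nonneg hx₃
  rcases le_or_gt x₃ 0 with hneg | hpos
  · have ha₀ : 0 ≤ a := ha.2 ⟨0, by norm_num, by norm_num⟩
    calc x₁^2 * x₂^2 * x₃ ≤ 0 := mul_nonpos_of_nonneg_of_nonpos (by positivity) hneg
      _ ≤ a * (1 - (4 * x₃^3 - 3 * x₃)) := mul_nonneg ha₀ hT
  · calc x₁^2 * x₂^2 * x₃ ≤ ((1 - x₃^2) / 2)^2 * x₃ :=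
          mul_le_mul_of_nonneg_right (sq_mul_sq_le_of_sq_add_sq_le (by linarith)) hpos.le
      _ = (1 + x₃)^2 * (1 - x₃) * x₃ / (4 * (1 + 4*x₃ + 4*x₃^2)) * (1 - (4 * x₃^3 - 3 * x₃)) :=
          sq_one_sub_sq_div_two_mul_eq hpos
      _ ≤ a * (1 - (4 * x₃^3 - 3 * x₃)) :=
          mul_le_mul_of_nonneg_right (ha.2 ⟨x₃, ⟨hpos.le, hx₃⟩, rfl⟩) hT
end

section
/- Let a = max_{t∈[0,1]} (1+t)²(1-t)t / (4(1+4t+4t²)). Then the polynomial P(x) = x_1²x_2²x_3 + a·T_3(x_3) satisfies ‖P‖_B = a on the closed euclidean unit ball B ⊆ ℝ³, where T_3(t) = 4t³-3t. -/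
/-!
Write `u = x₁²x₂²` and `s = x₃`. On the ball, AM-GM gives `0 ≤ u ≤ ((1 - s²)/2)²`, and `P` is odd
in `x₃`, so it suffices to treat `0 ≤ s ≤ 1`. There `P ≥ -a` because `T₃ + 1 = (s + 1)(2s - 1)² ≥ 0`,
while `a - a T₃(s) = a (1 - s)(1 + 2s)²`, so `P ≤ a` reduces after dividing by `1 - s` to
`(1 + s)²(1 - s)s ≤ 4a(1 + 2s)²`, which is the defining property of `a`. At a maximiser `t` of that
ratio both AM-GM and this last inequality are equalities, so `|P| = a` at
`x₁ = x₂ = √((1 - t²)/2)`, `x₃ = t`.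
-/

open Set

lemma chebyshevT3_add_one_nonneg {s : ℝ} (hs : -1 ≤ s) : 0 ≤ 4 * s^3 - 3 * s + 1 := by
  have hfactor : 4 * s^3 - 3 * s + 1 = (s + 1) * (2 * s - 1)^2 := by ring
  exact hfactor ▸ mul_nonneg (by linarith) (sq_nonneg _)

lemma abs_mul_add_mul_chebyshevT3_le {a s u : ℝ} (ha : 0 ≤ a) (hs₀ : 0 ≤ s) (hs₁ : s ≤ 1)
    (hu₀ : 0 ≤ u) (hu : u ≤ ((1 - s^2) / 2)^2)
    (hratio : (1 + s)^2 * (1 - s) * s ≤ a * (4 * (1 + 4 * s + 4 * s^2))) :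
    |u * s + a * (4 * s^3 - 3 * s)| ≤ a := by
  refine abs_le.2 ⟨?_, ?_⟩
  · have hT : 0 ≤ 4 * s^3 - 3 * s + 1 := chebyshevT3_add_one_nonneg (by linarith)
    linear_combination mul_nonneg hu₀ hs₀ + mul_nonneg ha hT
  · calc u * s + a * (4 * s^3 - 3 * s)
        ≤ ((1 - s^2) / 2)^2 * s + a * (4 * s^3 - 3 * s) := by gcongr
      _ = (1 - s) * ((1 + s)^2 * (1 - s) * s) / 4 + a * (4 * s^3 - 3 * s) := by ring
      _ ≤ (1 - s) * (a * (4 * (1 + 4 * s + 4 * s^2))) / 4 + a * (4 * s^3 - 3 * s) := by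
          gcongr
      _ = a := by ring

lemma abs_mul_add_mul_chebyshevT3_abs (a s u : ℝ) :
    |u * |s| + a * (4 * |s|^3 - 3 * |s|)| = |u * s + a * (4 * s^3 - 3 * s)| := by
  rcases abs_cases s with ⟨hs, -⟩ | ⟨hs, -⟩
  · rw [hs]
  · rw [hs, ← abs_neg]
    ring_nf

lemma sq_mul_sq_le_of_sum_sq_le {x₁ x₂ x₃ : ℝ} (hx : x₁^2 + x₂^2 + x₃^2 ≤ 1) :
    x₁^2 * x₂^2 ≤ ((1 - x₃^2) / 2)^2 := by
  have hamgm := four_mul_le_sq_add (x₁^2) (x₂^2)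
  have hsum : (x₁^2 + x₂^2)^2 ≤ (1 - x₃^2)^2 := by
    gcongr
    linarith
  nlinarith

lemma ratio_denom_pos {s : ℝ} (hs : 0 ≤ s) : 0 < 4 * (1 + 4 * s + 4 * s^2) := by
  positivity

/-- With `a = max_{t∈[0,1]} (1+t)²(1-t)t / (4(1+4t+4t²))`, the polynomial
`P(x) = x_1²x_2²x_3 + a T_3(x_3)` has uniform norm `a` on the closed unit ball of
`ℝ³`, where `T_3(t) = 4t³-3t`. -/
theorem stmt_10 (a : ℝ)
    (ha : IsGreatest {v : ℝ | ∃ t ∈ Set.Icc (0:ℝ) 1,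
      v = (1 + t)^2 * (1 - t) * t / (4 * (1 + 4*t + 4*t^2))} a) :
    IsGreatest {y : ℝ | ∃ x₁ x₂ x₃ : ℝ, x₁^2 + x₂^2 + x₃^2 ≤ 1 ∧
      y = |x₁^2 * x₂^2 * x₃ + a * (4 * x₃^3 - 3 * x₃)|} a := by
  obtain ⟨⟨t, ⟨ht₀, ht₁⟩, hta⟩, hub⟩ := ha
  have ha₀ : 0 ≤ a := by simpa using hub ⟨0, ⟨le_rfl, zero_le_one⟩, rfl⟩
  have hratio : ∀ s ∈ Icc (0:ℝ) 1, (1 + s)^2 * (1 - s) * s ≤ a * (4 * (1 + 4 * s + 4 * s^2)) :=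
    fun s hs ↦ (div_le_iff₀ (ratio_denom_pos hs.1)).1 (hub ⟨s, hs, rfl⟩)
  have hat : a * (4 * (1 + 4 * t + 4 * t^2)) = (1 + t)^2 * (1 - t) * t := by
    rw [hta, div_mul_cancel₀ _ (ratio_denom_pos ht₀).ne']
  have hr : 0 ≤ (1 - t^2) / 2 := by nlinarith
  refine ⟨⟨√((1 - t^2) / 2), √((1 - t^2) / 2), t, ?_, ?_⟩, ?_⟩
  · rw [Real.sq_sqrt hr]
    linarith
  · have hP : (1 - t^2) / 2 * ((1 - t^2) / 2) * t + a * (4 * t^3 - 3 * t) = a := by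
      linear_combination ((t - 1) / 4) * hat
    rw [Real.sq_sqrt hr, hP, abs_of_nonneg ha₀]
  · rintro y ⟨x₁, x₂, x₃, hx, rfl⟩
    have hx₃ : |x₃| ≤ 1 := abs_le_one_iff_mul_self_le_one.2 (by nlinarith)
    rw [← abs_mul_add_mul_chebyshevT3_abs]
    exact abs_mul_add_mul_chebyshevT3_le ha₀ (abs_nonneg x₃) hx₃ (by positivity)
      (by rw [sq_abs]; exact sq_mul_sq_le_of_sum_sq_le hx) (hratio _ ⟨abs_nonneg x₃, hx₃⟩)
end

section
/- With a = max_{t∈[0,1]} (1+t)²(1-t)t / (4(1+4t+4t²)), the error of best uniform approximation on the euclidean unit ball B ⊆ ℝ³ to the monomial x_1²x_2²x_3 by trivariate polynomials of total degree at most 4 equals a, and a Chebyshev polynomial (best deviation) is P(x) = x_1²x_2²x_3 + a·T_3(x_3). -/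
/-!
At `x = (x₀, x₁, x₂)` in the ball, put `s = x₂` and `u = x₀²x₁² ≤ (1 - s²)²/4`. The error of `-a T₃(x₂)` is
`u s + a T₃(s)`, odd in `s`; for `0 ≤ s ≤ 1` the identities `1 ± T₃(s) = (1 ± s)(1 ∓ 2s)²` reduce
`|u s + a T₃(s)| ≤ a` to `deviationBound s ≤ a`. It is attained at `(c, c, t)`, `c² = (1 - t²)/2`,
for `t` a maximiser of `deviationBound`.

Conversely, for each `t ∈ [0, 1/2]` 18 weighted nodes define a signed measure `μ` on the
ball annihilating every polynomial of degree `≤ 4`, with `∫ x₀²x₁²x₂ dμ = deviationBound t · ‖μ‖`;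
so no such polynomial has error below `deviationBound t`. Since `deviationBound` is smaller beyond
`1/2` than at `2/5`, its maximiser lies in `[0, 1/2]`.
-/

open MvPolynomial

section FiniteFunctional

variable {ι : Type*} [Fintype ι]

theorem sum_mul_le_sum_abs_mul_sSup {X : Type*} {S : Set X} {pts : ι → X}
    (hpts : ∀ j, pts j ∈ S) (w : ι → ℝ) {f g : X → ℝ}
    (hbdd : BddAbove {y | ∃ x ∈ S, y = |f x - g x|})
    (hg : ∑ j, w j * g (pts j) = 0) :
    ∑ j, w j * f (pts j) ≤ (∑ j, |w j|) * sSup {y | ∃ x ∈ S, y = |f x - g x|} :=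
  calc ∑ j, w j * f (pts j) = ∑ j, w j * (f (pts j) - g (pts j)) := by
        simp only [mul_sub, Finset.sum_sub_distrib, hg, sub_zero]
    _ ≤ ∑ j, |w j| * |f (pts j) - g (pts j)| :=
        Finset.sum_le_sum fun j _ => (abs_mul (w j) _).symm ▸ le_abs_self _
    _ ≤ ∑ j, |w j| * sSup {y | ∃ x ∈ S, y = |f x - g x|} := by
        gcongr with j; exact le_csSup hbdd ⟨pts j, hpts j, rfl⟩
    _ = _ := (Finset.sum_mul ..).symm

theorem MvPolynomial.sum_mul_eval_eq_zero_of_totalDegree_le {σ R : Type*} [CommSemiring R]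
    (pts : ι → σ → R) (w : ι → R) {d : ℕ}
    (hmon : ∀ α : σ →₀ ℕ, (α.sum fun _ e => e) ≤ d →
      ∑ j, w j * eval (pts j) (monomial α 1) = 0)
    {p : MvPolynomial σ R} (hp : p.totalDegree ≤ d) : ∑ j, w j * eval (pts j) p = 0 := by
  conv_lhs => rw [p.as_sum]
  simp_rw [map_sum, Finset.mul_sum]
  rw [Finset.sum_comm]
  refine Finset.sum_eq_zero fun α hα => ?_
  calc ∑ j, w j * eval (pts j) (monomial α (coeff α p))
      = coeff α p * ∑ j, w j * eval (pts j) (monomial α 1) := by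
        simp only [eval_monomial, Finset.mul_sum, one_mul]
        exact Finset.sum_congr rfl fun j _ => by ring
    _ = 0 := by rw [hmon α ((le_totalDegree hα).trans hp), mul_zero]

end FiniteFunctional

theorem eval_monomial_one_fin_three {R : Type*} [CommSemiring R] (x : Fin 3 → R)
    (α : Fin 3 →₀ ℕ) :
    eval x (monomial α 1) = x 0 ^ α 0 * x 1 ^ α 1 * x 2 ^ α 2 := by
  rw [eval_monomial, one_mul, Finsupp.prod_fintype _ _ fun i => pow_zero (x i),
    Fin.prod_univ_three]

theorem Finsupp.sum_fin_three (α : Fin 3 →₀ ℕ) : (α.sum fun _ e => e) = α 0 + α 1 + α 2 := by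
  rw [Finsupp.sum_fintype _ _ fun _ => rfl, Fin.sum_univ_three]

def unitBall : Set (Fin 3 → ℝ) := {x | x 0 ^ 2 + x 1 ^ 2 + x 2 ^ 2 ≤ 1}

theorem isCompact_unitBall : IsCompact unitBall := by
  refine Metric.isCompact_of_isClosed_isBounded (isClosed_le (by fun_prop) continuous_const) ?_
  refine (Metric.isBounded_closedBall (x := (0 : Fin 3 → ℝ)) (r := 1)).subset fun x hx => ?_
  rw [Metric.mem_closedBall, dist_zero_right, pi_norm_le_iff_of_nonneg zero_le_one]
  intro i
  have hsq : x i ^ 2 ≤ ∑ j, x j ^ 2 :=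
    Finset.single_le_sum (f := fun j => x j ^ 2) (fun j _ => sq_nonneg _) (Finset.mem_univ i)
  rw [Fin.sum_univ_three] at hsq
  rw [Real.norm_eq_abs, ← sq_le_one_iff_abs_le_one]
  exact hsq.trans hx

theorem IsCompact.bddAbove_setOf_exists_eq {X : Type*} [TopologicalSpace X] {S : Set X}
    (hS : IsCompact S) {F : X → ℝ} (hF : Continuous F) : BddAbove {y | ∃ x ∈ S, y = F x} := by
  have hset : {y | ∃ x ∈ S, y = F x} = F '' S := by
    ext y
    simp only [Set.mem_ofPred_eq, Set.mem_image, eq_comm]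
  exact hset ▸ hS.bddAbove_image hF.continuousOn

noncomputable def deviationBound (t : ℝ) : ℝ :=
  (1 + t) ^ 2 * (1 - t) * t / (4 * (1 + 4 * t + 4 * t ^ 2))

theorem deviationBound_zero : deviationBound 0 = 0 := by norm_num [deviationBound]

theorem deviationBound_two_fifths : deviationBound (2 / 5) = 49 / 1350 := by
  norm_num [deviationBound]

theorem deviationBound_le_iff {t a : ℝ} (ht : 0 ≤ t) :
    deviationBound t ≤ a ↔ t * (1 - t) * (1 + t) ^ 2 ≤ 4 * a * (1 + 2 * t) ^ 2 := by
  rw [deviationBound, div_le_iff₀ (by positivity)]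
  constructor <;> intro h <;> linarith

theorem deviationBound_lt_two_fifths {t : ℝ} (ht : 1 / 2 < t) :
    deviationBound t < deviationBound (2 / 5) := by
  rw [deviationBound_two_fifths, deviationBound, div_lt_iff₀ (by positivity)]
  nlinarith [mul_pos (sub_pos.2 ht) (sub_pos.2 ht), sq_nonneg (t - 1), sq_nonneg (t - 2 / 5)]

theorem abs_mul_add_chebyshev_le_of_nonneg {a u s : ℝ} (ha : deviationBound s ≤ a) (ha0 : 0 ≤ a)
    (hu : 0 ≤ u) (hus : 4 * u ≤ (1 - s ^ 2) ^ 2) (hs0 : 0 ≤ s) (hs1 : s ≤ 1) :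
    |u * s + a * (4 * s ^ 3 - 3 * s)| ≤ a := by
  rw [deviationBound_le_iff hs0] at ha
  rw [abs_le]
  constructor
  · -- `1 + T₃(s) = (1 + s)(1 - 2s)²`
    nlinarith [mul_nonneg hu hs0,
      mul_nonneg ha0 (mul_nonneg (by linarith : 0 ≤ 1 + s) (sq_nonneg (1 - 2 * s)))]
  · -- `1 - T₃(s) = (1 - s)(1 + 2s)²` and `s(1 - s²)² = (1 - s) · s(1 - s)(1 + s)²`
    nlinarith [mul_le_mul_of_nonneg_right hus hs0,
      mul_le_mul_of_nonneg_left ha (by linarith : 0 ≤ 1 - s)]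

theorem abs_mul_add_chebyshev_le {a u s : ℝ}
    (hmax : ∀ σ ∈ Set.Icc (0 : ℝ) 1, deviationBound σ ≤ a) (hu : 0 ≤ u)
    (hus : 4 * u ≤ (1 - s ^ 2) ^ 2) (hs : s ^ 2 ≤ 1) :
    |u * s + a * (4 * s ^ 3 - 3 * s)| ≤ a := by
  have ha0 : 0 ≤ a := deviationBound_zero ▸ hmax 0 ⟨le_rfl, zero_le_one⟩
  rcases le_total 0 s with hs0 | hs0
  · exact abs_mul_add_chebyshev_le_of_nonneg (hmax s ⟨hs0, by nlinarith⟩) ha0 hu hus hs0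
      (by nlinarith)
  · have h := abs_mul_add_chebyshev_le_of_nonneg (hmax (-s) ⟨by linarith, by nlinarith⟩) ha0 hu
      (by rwa [neg_sq]) (by linarith) (by nlinarith)
    rwa [← abs_neg, show -(u * -s + a * (4 * (-s) ^ 3 - 3 * -s)) = u * s + a * (4 * s ^ 3 - 3 * s)
      by ring] at h

theorem abs_sub_eval_bestApprox_le {a : ℝ}
    (hmax : ∀ σ ∈ Set.Icc (0 : ℝ) 1, deviationBound σ ≤ a) {x : Fin 3 → ℝ} (hx : x ∈ unitBall) :
    |x 0 ^ 2 * x 1 ^ 2 * x 2 + a * (4 * x 2 ^ 3 - 3 * x 2)| ≤ a := by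
  have hx : x 0 ^ 2 + x 1 ^ 2 + x 2 ^ 2 ≤ 1 := hx
  refine abs_mul_add_chebyshev_le hmax (by positivity) ?_
    (by nlinarith [sq_nonneg (x 0), sq_nonneg (x 1)])
  nlinarith [sq_nonneg (x 0 ^ 2 - x 1 ^ 2), sq_nonneg (x 0), sq_nonneg (x 1)]

-- Every node is an extremal point of the error of `bestApprox (deviationBound t)`, and the
-- sign of its weight is the sign of that error there.
noncomputable def nodes (t : ℝ) : Fin 18 → Fin 3 → ℝ :=
  let c := √((1 - t ^ 2) / 2)
  let b := √3 / 2
  ![![c, c, t], ![-c, c, t], ![c, -c, t], ![-c, -c, t],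
    ![c, c, -t], ![-c, c, -t], ![c, -c, -t], ![-c, -c, -t],
    ![0, 0, 1], ![0, 0, -1],
    ![b, 0, 1 / 2], ![-b, 0, 1 / 2], ![0, b, 1 / 2], ![0, -b, 1 / 2],
    ![b, 0, -1 / 2], ![-b, 0, -1 / 2], ![0, b, -1 / 2], ![0, -b, -1 / 2]]

noncomputable def weights (t : ℝ) : Fin 18 → ℝ :=
  let r := t * (1 - 4 * t ^ 2) / 6
  let s := t * (1 - t ^ 2) / 3
  ![1 / 8, 1 / 8, 1 / 8, 1 / 8, -(1 / 8), -(1 / 8), -(1 / 8), -(1 / 8),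
    r, -r, -s, -s, -s, -s, s, s, s, s]

theorem sq_sqrt_three_div_two : (√3 / 2) ^ 2 = 3 / 4 := by
  rw [div_pow, Real.sq_sqrt (by norm_num)]; norm_num

theorem sum_weights_mul_monomial {t : ℝ} (ht : t ^ 2 ≤ 1) {m n k : ℕ} (hmnk : m + n + k ≤ 4) :
    ∑ j, weights t j * (nodes t j 0 ^ m * nodes t j 1 ^ n * nodes t j 2 ^ k) = 0 := by
  have hc := Real.sq_sqrt (by linarith : 0 ≤ (1 - t ^ 2) / 2)
  have hb := sq_sqrt_three_div_two
  simp only [nodes, weights, Fin.sum_univ_succ, Fin.sum_univ_zero, Matrix.cons_val_zero,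
    Matrix.cons_val_one, Matrix.head_cons, Matrix.cons_val_succ, Matrix.cons_val_two,
    Matrix.tail_cons, add_zero]
  have hm : m ≤ 4 := by omega
  have hn : n ≤ 4 := by omega
  have hk : k ≤ 4 := by omega
  interval_cases m <;> interval_cases n <;> interval_cases k <;>
    first
    | (exfalso; omega)
    | ring1
    | linear_combination t * hc + (2 * t ^ 3 / 3 - 2 * t / 3) * hb

theorem sum_weights_mul_eval_eq_zero {t : ℝ} (ht : t ^ 2 ≤ 1) {p : MvPolynomial (Fin 3) ℝ}
    (hp : p.totalDegree ≤ 4) : ∑ j, weights t j * eval (nodes t j) p = 0 := by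
  refine sum_mul_eval_eq_zero_of_totalDegree_le _ _ (fun α hα => ?_) hp
  simp only [eval_monomial_one_fin_three]
  exact sum_weights_mul_monomial ht (Finsupp.sum_fin_three α ▸ hα)

theorem sum_weights_mul_target {t : ℝ} (ht : t ^ 2 ≤ 1) :
    ∑ j, weights t j * (nodes t j 0 ^ 2 * nodes t j 1 ^ 2 * nodes t j 2) =
      t * (1 - t ^ 2) ^ 2 / 4 := by
  have hc := Real.sq_sqrt (by linarith : 0 ≤ (1 - t ^ 2) / 2)
  simp only [nodes, weights, Fin.sum_univ_succ, Fin.sum_univ_zero, Matrix.cons_val_zero,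
    Matrix.cons_val_one, Matrix.head_cons, Matrix.cons_val_succ, Matrix.cons_val_two,
    Matrix.tail_cons, add_zero]
  linear_combination (t * (√((1 - t ^ 2) / 2) ^ 2 + (1 - t ^ 2) / 2)) * hc

theorem sum_abs_weights {t : ℝ} (ht0 : 0 ≤ t) (ht : t ≤ 1 / 2) :
    ∑ j, |weights t j| = (1 - t) * (1 + 2 * t) ^ 2 := by
  have hr : |t * (1 - 4 * t ^ 2) / 6| = t * (1 - 4 * t ^ 2) / 6 := abs_of_nonneg (by
    have : 0 ≤ 1 - 4 * t ^ 2 := by nlinarith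
    positivity)
  have hs : |t * (1 - t ^ 2) / 3| = t * (1 - t ^ 2) / 3 := abs_of_nonneg (by
    have : 0 ≤ 1 - t ^ 2 := by nlinarith
    positivity)
  simp only [weights, Fin.sum_univ_succ, Fin.sum_univ_zero, Matrix.cons_val_zero,
    Matrix.cons_val_succ, abs_neg, add_zero, hr, hs]
  norm_num
  ring

theorem nodes_mem_unitBall {t : ℝ} (ht : t ^ 2 ≤ 1) (j : Fin 18) : nodes t j ∈ unitBall := by
  have hc := Real.sq_sqrt (by linarith : 0 ≤ (1 - t ^ 2) / 2)
  have hb := sq_sqrt_three_div_two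
  revert j
  simp only [unitBall, nodes, Set.mem_ofPred_eq, Fin.forall_fin_succ, Matrix.cons_val_zero,
    Matrix.cons_val_one, Matrix.head_cons, Matrix.cons_val_succ, Matrix.cons_val_two,
    Matrix.tail_cons, IsEmpty.forall_iff, and_true, neg_sq, hc, hb]
  norm_num

theorem deviationBound_le_sSup {t : ℝ} (ht0 : 0 ≤ t) (ht : t ≤ 1 / 2)
    {p : MvPolynomial (Fin 3) ℝ} (hp : p.totalDegree ≤ 4) :
    deviationBound t ≤ sSup {y | ∃ x ∈ unitBall, y = |x 0 ^ 2 * x 1 ^ 2 * x 2 - eval x p|} := by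
  have ht2 : t ^ 2 ≤ 1 := by nlinarith
  have h := sum_mul_le_sum_abs_mul_sSup (nodes_mem_unitBall ht2) (weights t)
    (isCompact_unitBall.bddAbove_setOf_exists_eq
      ((by fun_prop : Continuous fun x : Fin 3 → ℝ => x 0 ^ 2 * x 1 ^ 2 * x 2).sub
        (continuous_eval p)).abs) (sum_weights_mul_eval_eq_zero ht2 hp)
  rw [sum_weights_mul_target ht2, sum_abs_weights ht0 ht] at h
  rw [deviationBound_le_iff ht0]
  refine le_of_mul_le_mul_left ?_ (by linarith : 0 < 1 - t)
  linear_combination 4 * h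

noncomputable def bestApprox (a : ℝ) : MvPolynomial (Fin 3) ℝ :=
  -(C a * (4 * X 2 ^ 3 - 3 * X 2))

theorem eval_bestApprox (a : ℝ) (x : Fin 3 → ℝ) :
    eval x (bestApprox a) = -(a * (4 * x 2 ^ 3 - 3 * x 2)) := by
  simp [bestApprox]

theorem totalDegree_bestApprox_le (a : ℝ) : (bestApprox a).totalDegree ≤ 3 := by
  have h : bestApprox a = (-(4 * a)) • X 2 ^ 3 + (3 * a) • X 2 := by
    simp only [bestApprox, smul_eq_C_mul, C_neg, C_mul, map_ofNat]
    ring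
  rw [h]
  refine (totalDegree_add _ _).trans (max_le ?_ ?_)
  · exact (totalDegree_smul_le _ _).trans (totalDegree_X_pow _ _).le
  · exact (totalDegree_smul_le _ _).trans ((totalDegree_X _).trans_le (by norm_num))

theorem isGreatest_abs_sub_eval_bestApprox {a t : ℝ} (ht : t ∈ Set.Icc (0 : ℝ) 1)
    (hat : a = deviationBound t) (hmax : ∀ σ ∈ Set.Icc (0 : ℝ) 1, deviationBound σ ≤ a) :
    IsGreatest {y | ∃ x ∈ unitBall, y = |x 0 ^ 2 * x 1 ^ 2 * x 2 - eval x (bestApprox a)|} a := by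
  simp only [eval_bestApprox, sub_neg_eq_add]
  refine ⟨⟨nodes t 0, nodes_mem_unitBall (by nlinarith [ht.1, ht.2]) 0, ?_⟩, ?_⟩
  · have hc := Real.sq_sqrt (by nlinarith [ht.1, ht.2] : 0 ≤ (1 - t ^ 2) / 2)
    have ha : a * (4 * (1 + 4 * t + 4 * t ^ 2)) = (1 + t) ^ 2 * (1 - t) * t := by
      rw [hat, deviationBound, div_mul_cancel₀]
      nlinarith [ht.1]
    simp only [nodes, Matrix.cons_val_zero, Matrix.cons_val_one, Matrix.head_cons,
      Matrix.cons_val_two, Matrix.tail_cons, hc]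
    rw [show (1 - t ^ 2) / 2 * ((1 - t ^ 2) / 2) * t + a * (4 * t ^ 3 - 3 * t) = a by
      linear_combination -(1 - t) / 4 * ha]
    exact (abs_of_nonneg (deviationBound_zero ▸ hmax 0 ⟨le_rfl, zero_le_one⟩)).symm
  · rintro y ⟨x, hx, rfl⟩
    exact abs_sub_eval_bestApprox_le hmax hx

/-- With `a = max_{t∈[0,1]} (1+t)²(1-t)t / (4(1+4t+4t²))`, the error of best uniform
approximation on the unit ball of `ℝ³` to `x_1²x_2²x_3` by trivariate polynomials of
total degree `≤ 4` equals `a`, and a Chebyshev polynomial is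
`P(x) = x_1²x_2²x_3 + a T_3(x_3)`, i.e. the best approximant is `-a T_3(x_3)`. -/
theorem stmt_11 (a : ℝ)
    (ha : IsGreatest {v : ℝ | ∃ t ∈ Set.Icc (0:ℝ) 1,
      v = (1 + t)^2 * (1 - t) * t / (4 * (1 + 4*t + 4*t^2))} a)
    (B : Set (Fin 3 → ℝ)) (hB : B = {x : Fin 3 → ℝ | x 0 ^ 2 + x 1 ^ 2 + x 2 ^ 2 ≤ 1})
    (q : MvPolynomial (Fin 3) ℝ)
    (hq : q = - (MvPolynomial.C a * (4 * X 2 ^ 3 - 3 * X 2))) :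
    q.totalDegree ≤ 4 ∧
    sSup {y : ℝ | ∃ x ∈ B, y = |x 0 ^ 2 * x 1 ^ 2 * x 2 - MvPolynomial.eval x q|} = a ∧
    ∀ p : MvPolynomial (Fin 3) ℝ, p.totalDegree ≤ 4 →
      a ≤ sSup {y : ℝ | ∃ x ∈ B, y = |x 0 ^ 2 * x 1 ^ 2 * x 2 - MvPolynomial.eval x p|} := by
  obtain ⟨⟨t, ht, hat⟩, hub⟩ := ha
  have hmax : ∀ σ ∈ Set.Icc (0 : ℝ) 1, deviationBound σ ≤ a := fun σ hσ => hub ⟨σ, hσ, rfl⟩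
  have ht_half : t ≤ 1 / 2 := by
    by_contra! h
    exact (hat ▸ hmax (2 / 5) ⟨by norm_num, by norm_num⟩).not_gt (deviationBound_lt_two_fifths h)
  subst hB hq
  refine ⟨(totalDegree_bestApprox_le a).trans (by norm_num), ?_, fun p hp => ?_⟩
  · exact (isGreatest_abs_sub_eval_bestApprox ht hat hmax).csSup_eq
  · exact hat ▸ deviationBound_le_sSup ht.1 ht_half hp
end

section
/- The equation max_{y∈[0,1/2]} y(1-2y)(y-τ)² = τ²/18 has a unique solution τ in [0, 1/4]. -/
/-!
The maximum `M τ` of `y (1 - 2y) (y - τ)²` over `y ∈ [0, 1/2]` is continuous in `τ` (a parametric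
maximum over a compact set) and antitone on `τ ≤ 1/4`: reflecting `y ↦ 1/2 - y` keeps the factor
`y (1 - 2y)` and moves `y` at least as far from `τ₁` as it was from `τ₂ ≥ τ₁`. Hence `M τ - τ²/18`
is strictly decreasing on `[0, 1/4]`; it is positive at `0` and negative at `1/4`, so it has
exactly one zero there.
-/

open Set

noncomputable section

def objective (τ y : ℝ) : ℝ := y * (1 - 2 * y) * (y - τ) ^ 2

def maxObjective (τ : ℝ) : ℝ := sSup (objective τ '' Icc 0 (1 / 2))

lemma continuous_objective : Continuous fun p : ℝ × ℝ => objective p.1 p.2 := by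
  unfold objective; fun_prop

lemma isGreatest_maxObjective (τ : ℝ) :
    IsGreatest (objective τ '' Icc 0 (1 / 2)) (maxObjective τ) :=
  (isCompact_Icc.image (continuous_objective.comp (Continuous.prodMk_right τ))).isGreatest_sSup
    ((nonempty_Icc.2 (by norm_num)).image _)

lemma isGreatest_objective_iff (τ v : ℝ) :
    IsGreatest (objective τ '' Icc 0 (1 / 2)) v ↔ v = maxObjective τ :=
  ⟨fun h => h.unique (isGreatest_maxObjective τ), fun h => h ▸ isGreatest_maxObjective τ⟩

lemma continuous_maxObjective : Continuous maxObjective :=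
  isCompact_Icc.continuous_sSup continuous_objective

lemma objective_one_half_sub (τ y : ℝ) :
    objective τ (1 / 2 - y) = y * (1 - 2 * y) * (1 / 2 - y - τ) ^ 2 := by
  unfold objective; ring

lemma objective_le_max_reflect {τ₁ τ₂ y : ℝ} (h₁₂ : τ₁ ≤ τ₂) (hsum : τ₁ + τ₂ ≤ 1 / 2)
    (hy : y ∈ Icc (0 : ℝ) (1 / 2)) :
    objective τ₂ y ≤ max (objective τ₁ y) (objective τ₁ (1 / 2 - y)) := by
  have hw : 0 ≤ y * (1 - 2 * y) := mul_nonneg hy.1 (by linarith [hy.2])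
  rw [objective_one_half_sub, objective]
  rcases le_total ((τ₁ + τ₂) / 2) y with hmid | hmid
  · refine le_max_of_le_left (mul_le_mul_of_nonneg_left ?_ hw)
    nlinarith
  · refine le_max_of_le_right (mul_le_mul_of_nonneg_left ?_ hw)
    nlinarith

lemma maxObjective_antitoneOn : AntitoneOn maxObjective (Iic (1 / 4)) := by
  intro τ₁ hτ₁ τ₂ hτ₂ h₁₂
  obtain ⟨y, hy, hmax⟩ := (isGreatest_maxObjective τ₂).1
  have hy' : 1 / 2 - y ∈ Icc (0 : ℝ) (1 / 2) := ⟨by linarith [hy.2], by linarith [hy.1]⟩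
  have hub := (isGreatest_maxObjective τ₁).2
  rw [← hmax]
  exact (objective_le_max_reflect h₁₂ (by linarith [mem_Iic.1 hτ₁, mem_Iic.1 hτ₂]) hy).trans
    (max_le (hub (mem_image_of_mem _ hy)) (hub (mem_image_of_mem _ hy')))

lemma maxObjective_zero_ge : 27 / 2048 ≤ maxObjective 0 := by
  have hle := (isGreatest_maxObjective 0).2 (mem_image_of_mem _ (⟨by norm_num, by norm_num⟩ :
    (3 / 8 : ℝ) ∈ Icc 0 (1 / 2)))
  norm_num [objective] at hle ⊢
  linarith

lemma maxObjective_one_quarter_le : maxObjective (1 / 4) ≤ 1 / 512 := by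
  obtain ⟨y, -, hmax⟩ := (isGreatest_maxObjective (1 / 4)).1
  rw [← hmax, objective]
  -- with `p = y (1/2 - y)` the objective is `2 p (1/16 - p)`
  nlinarith [sq_nonneg (32 * y ^ 2 - 16 * y + 1)]

lemma strictAntiOn_maxObjective_sub :
    StrictAntiOn (fun τ => maxObjective τ - τ ^ 2 / 18) (Icc 0 (1 / 4)) := by
  intro τ₁ hτ₁ τ₂ hτ₂ h₁₂
  have hM := maxObjective_antitoneOn (mem_Iic.2 hτ₁.2) (mem_Iic.2 hτ₂.2) h₁₂.le
  have hsq : τ₁ ^ 2 < τ₂ ^ 2 := pow_lt_pow_left₀ h₁₂ hτ₁.1 two_ne_zero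
  dsimp only
  linarith

end

/-- The equation `max_{y∈[0,1/2]} y(1-2y)(y-τ)² = τ²/18` has a unique solution `τ`
in `[0, 1/4]`. -/
theorem stmt_13 :
    ∃! τ : ℝ, τ ∈ Set.Icc (0:ℝ) (1/4) ∧
      IsGreatest {v : ℝ | ∃ y ∈ Set.Icc (0:ℝ) (1/2),
        v = y * (1 - 2*y) * (y - τ)^2} (τ^2 / 18) := by
  have hset : ∀ τ : ℝ, {v : ℝ | ∃ y ∈ Icc (0:ℝ) (1/2), v = y * (1 - 2*y) * (y - τ)^2} =
      objective τ '' Icc 0 (1 / 2) := fun τ => by ext; simp [objective, eq_comm]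
  simp only [hset, isGreatest_objective_iff]
  have hcont : ContinuousOn (fun τ => maxObjective τ - τ ^ 2 / 18) (Icc 0 (1 / 4)) :=
    (continuous_maxObjective.sub (by fun_prop)).continuousOn
  obtain ⟨τ, hτ, hzero⟩ := intermediate_value_Icc' (by norm_num) hcont (show (0 : ℝ) ∈ _ from
    ⟨by norm_num; linarith [maxObjective_one_quarter_le], by linarith [maxObjective_zero_ge]⟩)
  refine ⟨τ, ⟨hτ, by linarith⟩, fun τ' ⟨hτ', heq⟩ => ?_⟩
  exact strictAntiOn_maxObjective_sub.injOn hτ' hτ (by dsimp only at hzero ⊢; linarith)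
end

section
/- The parameter τ of the simplex Chebyshev construction, i.e., the unique τ ∈ [0,1/4] with max_{y∈[0,1/2]} y(1-2y)(y-τ)² = τ²/18, is the smallest real root of the quartic polynomial 2880t⁴ - 5472t³ + 4880t² - 1944t + 243. -/
/-!
At an interior maximiser `y` of `p(y) = y(1-2y)(y-τ)²` on `[0,1/2]` with value `τ²/18 > 0`
we have `y ≠ τ`, so `p'(y) = (y-τ)(-8y² + (3+4τ)y - τ)` forces `y` onto a quadratic. Eliminating
`y` between this quadratic and `p(y) = τ²/18` gives `τ² q(τ) = 0` for the quartic `q`, and `τ ≠ 0`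
since otherwise `p(1/4) = 1/128` would exceed the maximum `0`. Finally `q` is strictly decreasing on `(-∞, 1/4]`, so no root lies below `τ`.
-/

open Set

noncomputable section

namespace SimplexChebyshev

def profile (τ y : ℝ) : ℝ := y * (1 - 2 * y) * (y - τ) ^ 2

def quartic (t : ℝ) : ℝ := 2880 * t ^ 4 - 5472 * t ^ 3 + 4880 * t ^ 2 - 1944 * t + 243

theorem hasDerivAt_profile (τ y : ℝ) :
    HasDerivAt (profile τ) ((y - τ) * (-8 * y ^ 2 + (3 + 4 * τ) * y - τ)) y := by
  have h := ((hasDerivAt_id' y).mul ((hasDerivAt_const y (1 : ℝ)).sub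
    ((hasDerivAt_id' y).const_mul 2))).mul (((hasDerivAt_id' y).sub_const τ).pow 2)
  exact h.congr_deriv (by simp only [Pi.mul_apply, Pi.sub_apply, Pi.pow_apply]; push_cast; ring)

theorem critical_eq_zero_of_isLocalMax {τ y : ℝ} (hmax : IsLocalMax (profile τ) y)
    (hyτ : y ≠ τ) : -8 * y ^ 2 + (3 + 4 * τ) * y - τ = 0 :=
  (mul_eq_zero.mp (hmax.hasDerivAt_eq_zero (hasDerivAt_profile τ y))).resolve_left
    (sub_ne_zero.mpr hyτ)

theorem mem_Ioo_of_profile_ne_zero {τ y : ℝ} (hy : y ∈ Icc (0 : ℝ) (1 / 2))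
    (h : profile τ y ≠ 0) : y ∈ Ioo (0 : ℝ) (1 / 2) := by
  refine ⟨hy.1.lt_of_ne ?_, hy.2.lt_of_ne ?_⟩ <;> rintro rfl <;> simp [profile] at h

theorem sq_mul_quartic_eq_zero {τ y : ℝ} (hcrit : -8 * y ^ 2 + (3 + 4 * τ) * y - τ = 0)
    (hval : profile τ y = τ ^ 2 / 18) : τ ^ 2 * quartic τ = 0 := by
  unfold profile at hval
  unfold quartic
  -- cofactors of the resultant of the two equations with respect to `y`
  linear_combination
    (18 * ((-243) + 1080 * τ + 160 * τ ^ 2 - 1152 * τ ^ 3 + 2304 * τ ^ 4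
      + y * (648 - 3168 * τ + 3456 * τ ^ 2 - 4608 * τ ^ 3))) * hval
    + (864 * τ ^ 2 - 5040 * τ ^ 3 + 6624 * τ ^ 4 - 5184 * τ ^ 5
      + y * (-2430 * τ + 10944 * τ ^ 2 - 864 * τ ^ 3 - 5184 * τ ^ 4 + 20736 * τ ^ 5)
      + y ^ 2 * (1458 - 2268 * τ - 20160 * τ ^ 2 + 25920 * τ ^ 3 - 41472 * τ ^ 4)
      + y ^ 3 * (-2916 + 14256 * τ - 15552 * τ ^ 2 + 20736 * τ ^ 3)) * hcrit

theorem quartic_strictAntiOn : StrictAntiOn quartic (Iic (1 / 4)) := by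
  intro t (ht : t ≤ 1 / 4) s (hs : s ≤ 1 / 4) hts
  -- With `a = (1/4 - t) + (1/4 - s) ≥ 0`, the difference quotient is
  -- `-350 - 1856a - 1944a² - 1440a³ - 648(t-s)² - 1440a(t-s)² < 0`.
  have ha : 0 ≤ 1 / 2 - t - s := by linarith
  have hquot : 2880 * (t + s) * (t ^ 2 + s ^ 2) - 5472 * (t ^ 2 + t * s + s ^ 2)
      + 4880 * (t + s) - 1944 < 0 := by
    nlinarith [mul_nonneg ha (sq_nonneg (t - s)), pow_nonneg ha 2, pow_nonneg ha 3]
  have hdiff : quartic t - quartic s = (t - s) * (2880 * (t + s) * (t ^ 2 + s ^ 2)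
      - 5472 * (t ^ 2 + t * s + s ^ 2) + 4880 * (t + s) - 1944) := by
    unfold quartic
    ring
  nlinarith [mul_pos_of_neg_of_neg (sub_neg.mpr hts) hquot]

theorem le_of_quartic_eq_zero {τ t : ℝ} (hτ : τ ≤ 1 / 4) (hqτ : quartic τ = 0)
    (hqt : quartic t = 0) : τ ≤ t := by
  by_contra! hlt
  have := quartic_strictAntiOn (mem_Iic.mpr (hlt.le.trans hτ)) (mem_Iic.mpr hτ) hlt
  linarith

end SimplexChebyshev

end

open SimplexChebyshev in
/-- The unique `τ ∈ [0,1/4]` with `max_{y∈[0,1/2]} y(1-2y)(y-τ)² = τ²/18` is the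
smallest real root of `2880t⁴ - 5472t³ + 4880t² - 1944t + 243`. -/
theorem stmt_18 (τ : ℝ) (hτmem : τ ∈ Set.Icc (0:ℝ) (1/4))
    (hτ : IsGreatest {v : ℝ | ∃ y ∈ Set.Icc (0:ℝ) (1/2),
      v = y * (1 - 2*y) * (y - τ)^2} (τ^2 / 18)) :
    2880 * τ^4 - 5472 * τ^3 + 4880 * τ^2 - 1944 * τ + 243 = 0 ∧
    ∀ t : ℝ, 2880 * t^4 - 5472 * t^3 + 4880 * t^2 - 1944 * t + 243 = 0 → τ ≤ t := by
  obtain ⟨⟨y, hyI, hy⟩, hub⟩ := hτ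
  have hval : profile τ y = τ ^ 2 / 18 := hy.symm
  have hmax : IsMaxOn (profile τ) (Icc 0 (1 / 2)) y := fun z hz => hval ▸ hub ⟨z, hz, rfl⟩
  have hτ0 : τ ≠ 0 := by
    rintro rfl
    have := hub ⟨1 / 4, by norm_num, rfl⟩
    norm_num at this
  have hpos : profile τ y ≠ 0 := by rw [hval]; positivity
  have hyτ : y ≠ τ := by rintro rfl; simp [profile] at hpos
  obtain ⟨hy0, hy12⟩ := mem_Ioo_of_profile_ne_zero hyI hpos
  have hcrit := critical_eq_zero_of_isLocalMax (hmax.isLocalMax (Icc_mem_nhds hy0 hy12)) hyτ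
  have hq : quartic τ = 0 :=
    (mul_eq_zero.mp (sq_mul_quartic_eq_zero hcrit hval)).resolve_left (pow_ne_zero 2 hτ0)
  exact ⟨hq, fun t ht => le_of_quartic_eq_zero hτmem.2 hq ht⟩
end
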